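/- In the Fock-Fischer space on C^n, the norm of the polynomial z ↦ (zz^t)^k computed in coordinates w_i = √2 z_i equals ‖(zz^t)^k‖²_F = k! (n/2)_k. -/

import Mathlib

/-!
Substituting the partial derivatives into a polynomial, `p ↦ p(∂)`, is an algebra homomorphism
into the commutative algebra generated by the `∂ᵢ`; hence `(ww^t)^k(∂) = Δ^k` and, since the
coefficient `2^{-k}` is real, `‖(zz^t)^k‖²_F = 4^{-k} Δ^k (ww^t)^k`. Euler's identity for the
homogeneous polynomial `(ww^t)^t` gives `Δ (ww^t)^{t+1} = 2(t+1)(2t+n) (ww^t)^t`, so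
`Δ^k (ww^t)^k = ∏_{m<k} 2(m+1)(2m+n) = 4^k k! (n/2)_k`.
-/


open MvPolynomial

/-- The differential operator `∂^α` acting on polynomials. -/
noncomputable def Dpow {n : ℕ} (α : Fin n →₀ ℕ) (p : MvPolynomial (Fin n) ℂ) :
    MvPolynomial (Fin n) ℂ :=
  (Finset.univ : Finset (Fin n)).toList.foldr (fun i q => (fun r => pderiv i r)^[α i] q) p

/-- The Fock-Fischer inner product `⟨p,q⟩ = p(∂)(q^*)|_{w=0}`, where `q^*` has
conjugated coefficients. -/
noncomputable def fockInner {n : ℕ} (p q : MvPolynomial (Fin n) ℂ) : ℂ :=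
  constantCoeff (∑ α ∈ p.support, p.coeff α • Dpow α (MvPolynomial.map (starRingEnd ℂ) q))

theorem Module.End.list_prod_map_apply {ι R M : Type*} [Semiring R] [AddCommMonoid M]
    [Module R M] (l : List ι) (f : ι → Module.End R M) (m : M) :
    (l.map f).prod m = l.foldr (fun i x => f i x) m := by
  induction l with
  | nil => rfl
  | cons i l ih => simp [ih]

namespace MvPolynomial

variable {σ R : Type*} [CommSemiring R]

theorem pderiv_pderiv_comm (i j : σ) (p : MvPolynomial σ R) :
    pderiv i (pderiv j p) = pderiv j (pderiv i p) := by
  induction p using MvPolynomial.induction_on' with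
  | monomial s a =>
    rcases eq_or_ne i j with rfl | hij
    · rfl
    · have hi : (s - Finsupp.single j 1 : σ →₀ ℕ) i = s i := by simp [hij.symm]
      have hj : (s - Finsupp.single i 1 : σ →₀ ℕ) j = s j := by simp [hij]
      rw [pderiv_monomial, pderiv_monomial, pderiv_monomial, pderiv_monomial, hi, hj,
        tsub_right_comm, mul_right_comm]
  | add p q hp hq => simp only [map_add, hp, hq]

section DiffOp

variable (σ R)

noncomputable def pderivSubalgebra : Subalgebra R (Module.End R (MvPolynomial σ R)) :=
  Algebra.adjoin R (Set.range fun i => (pderiv i).toLinearMap)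

instance : IsMulCommutative (pderivSubalgebra σ R) :=
  Algebra.isMulCommutative_adjoin R <| by
    rintro _ ⟨i, rfl⟩ _ ⟨j, rfl⟩
    exact LinearMap.ext (pderiv_pderiv_comm i j)

open scoped IsMulCommutative

/-- The constant-coefficient differential operator `p(∂)`. -/
noncomputable def diffOp : MvPolynomial σ R →ₐ[R] Module.End R (MvPolynomial σ R) :=
  (pderivSubalgebra σ R).val.comp
    (aeval fun i => ⟨(pderiv i).toLinearMap, Algebra.subset_adjoin ⟨i, rfl⟩⟩)

variable {σ R}

theorem diffOp_X (i : σ) : diffOp σ R (X i) = (pderiv i).toLinearMap := by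
  simp [diffOp]

theorem diffOp_monomial [Fintype σ] (s : σ →₀ ℕ) (a : R) :
    diffOp σ R (monomial s a) =
      a • (Finset.univ.toList.map fun i => (pderiv i).toLinearMap ^ s i).prod := by
  rw [diffOp, AlgHom.comp_apply, aeval_monomial, Finsupp.prod_pow, ← Finset.prod_map_toList,
    map_mul, AlgHom.commutes, map_list_prod, List.map_map, Algebra.algebraMap_eq_smul_one,
    smul_one_mul]
  rfl

end DiffOp

section Laplacian

variable [Fintype σ]

variable (σ R) in
noncomputable def laplacian : Module.End R (MvPolynomial σ R) :=
  ∑ i, (pderiv i).toLinearMap ^ 2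

theorem laplacian_apply (p : MvPolynomial σ R) :
    laplacian σ R p = ∑ i, pderiv i (pderiv i p) := by
  simp [laplacian, sq]

theorem diffOp_sum_X_sq : diffOp σ R (∑ i, X i ^ 2) = laplacian σ R := by
  simp only [map_sum, map_pow, diffOp_X, laplacian]

theorem pderiv_sum_X_sq (i : σ) : pderiv i (∑ j, X j ^ 2 : MvPolynomial σ R) = 2 * X i := by
  classical
  simp [pderiv_X, Pi.single_apply, mul_comm]

theorem pderiv_sum_X_sq_pow_succ (i : σ) (t : ℕ) :
    pderiv i ((∑ j, X j ^ 2 : MvPolynomial σ R) ^ (t + 1)) =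
      (2 * (t + 1)) • (X i * (∑ j, X j ^ 2) ^ t) := by
  rw [pderiv_pow, pderiv_sum_X_sq, nsmul_eq_mul]
  push_cast
  ring

theorem laplacian_sum_X_sq_pow_succ (t : ℕ) :
    laplacian σ R ((∑ i, X i ^ 2) ^ (t + 1)) =
      (2 * (t + 1) * (2 * t + Fintype.card σ)) • (∑ i, X i ^ 2) ^ t := by
  have euler := ((IsHomogeneous.sum _ _ _ fun i _ => isHomogeneous_X_pow i 2).pow t
    : (∑ i : σ, (X i : MvPolynomial σ R) ^ 2) ^ t |>.IsHomogeneous (2 * t)).sum_X_mul_pderiv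
  simp only [laplacian_apply, pderiv_sum_X_sq_pow_succ, map_nsmul, pderiv_mul, pderiv_X_self,
    one_mul, ← Finset.smul_sum, Finset.sum_add_distrib, euler, Finset.sum_const, Finset.card_univ]
  rw [← add_smul, smul_smul, add_comm (Fintype.card σ)]

theorem laplacian_pow_sum_X_sq_pow (k : ℕ) :
    (laplacian σ R ^ k) ((∑ i, X i ^ 2) ^ k) =
      (∏ m ∈ Finset.range k, 2 * (m + 1) * (2 * m + Fintype.card σ)) • 1 := by
  induction k with
  | zero => simp
  | succ k ih =>
    rw [pow_succ, Module.End.mul_apply, laplacian_sum_X_sq_pow_succ, map_nsmul, ih, smul_smul,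
      Finset.prod_range_succ, mul_comm]

end Laplacian

end MvPolynomial

theorem four_pow_mul_factorial_mul_ascPochhammer_eval_half {K : Type*} [Field K] [NeZero (2 : K)]
    (k : ℕ) (x : K) :
    4 ^ k * k.factorial * (ascPochhammer K k).eval (x / 2) =
      ∏ m ∈ Finset.range k, 2 * (m + 1) * (2 * m + x) := by
  induction k with
  | zero => simp
  | succ k ih =>
    rw [Finset.prod_range_succ, ← ih, ascPochhammer_succ_eval, Nat.factorial_succ]
    push_cast
    field_simp
    ring

theorem smul_Dpow_eq_diffOp_monomial {n : ℕ} (α : Fin n →₀ ℕ) (a : ℂ)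
    (p : MvPolynomial (Fin n) ℂ) : a • Dpow α p = diffOp (Fin n) ℂ (monomial α a) p := by
  rw [diffOp_monomial, LinearMap.smul_apply, Module.End.list_prod_map_apply]
  simp only [Module.End.pow_apply]
  rfl

theorem fockInner_eq_constantCoeff_diffOp {n : ℕ} (p q : MvPolynomial (Fin n) ℂ) :
    fockInner p q = constantCoeff (diffOp (Fin n) ℂ p (map (starRingEnd ℂ) q)) := by
  conv_rhs => rw [as_sum p, map_sum, LinearMap.sum_apply]
  simp only [fockInner, smul_Dpow_eq_diffOp_monomial]

/-- In `w`-coordinates `wᵢ = √2 zᵢ`, the polynomial `(zz^t)^k = 2^{-k} (ww^t)^k` has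
Fock-Fischer squared norm `k! (n/2)_k`. -/
theorem fock_norm_sq_q_pow (n k : ℕ) :
    fockInner (((2 : ℂ)⁻¹) ^ k • (∑ i : Fin n, (X i : MvPolynomial (Fin n) ℂ) ^ 2) ^ k)
        (((2 : ℂ)⁻¹) ^ k • (∑ i : Fin n, (X i : MvPolynomial (Fin n) ℂ) ^ 2) ^ k)
    = (k.factorial : ℂ) * (ascPochhammer ℂ k).eval ((n : ℂ) / 2) := by
  set c : ℂ := 2⁻¹ ^ k
  set q : MvPolynomial (Fin n) ℂ := ∑ i, X i ^ 2
  have hconj : map (starRingEnd ℂ) (c • q ^ k) = c • q ^ k := by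
    simp [c, q, smul_eq_C_mul, map_ofNat]
  have hop : diffOp (Fin n) ℂ (c • q ^ k) = c • laplacian (Fin n) ℂ ^ k := by
    rw [map_smul, map_pow, diffOp_sum_X_sq]
  rw [fockInner_eq_constantCoeff_diffOp, hconj, hop, LinearMap.smul_apply, LinearMap.map_smul,
    laplacian_pow_sum_X_sq_pow]
  simp only [smul_eq_C_mul, map_mul, constantCoeff_C, map_natCast, mul_one, Fintype.card_fin,
    nsmul_eq_mul]
  push_cast
  rw [← four_pow_mul_factorial_mul_ascPochhammer_eval_half]
  have hc : c * c * 4 ^ k = 1 := by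
    simp only [c, ← mul_pow]
    norm_num
  linear_combination (k.factorial * (ascPochhammer ℂ k).eval ((n : ℂ) / 2)) * hc
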